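/- For every integer m ≥ 0 and every nonzero complex number z, K_m(z) = ∫_0^π e^{z cos w} sin(m w) dw equals (m/z)(e^z + (-1)^m e^{-z}) + (1/z) ∑_{n=1}^{m-1} (2/z)^n ((-1)^n e^z + (-1)^m e^{-z}) ∑_{k=1}^{m-n} C(n+k-1, k-1) ∏_{j=k}^{n+k-1} (m-j). -/

import Mathlib

/-!
Differentiating `e^{z cos w} cos(c w)` and using `2 sin w cos(c w) = sin((c+1)w) - sin((c-1)w)`,
the fundamental theorem of calculus on `[0, π]` gives a three-term recurrence for the integrals
with real index `c`. At `c = 0` (the integrand is odd in `c`) it evaluates `K_1`; at `c = m + 1` it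
gives `z (K_{m+2} - K_m) = 2 (e^z + (-1)^m e^{-z}) - 2 (m+1) K_{m+1}`. Consequently
`z K_m = ∑_{n<m} (2/z)^n ((-1)^n e^z + (-1)^m e^{-z}) c(m,n)` for coefficients with `c(m,0) = m`
and `c(m+2,n+1) = c(m,n+1) + (m+1) c(m+1,n)`, a recursion solved by `c(m,n) = n! C(m+n, 2n+1)`.
Writing the product in the theorem as a descending factorial, its inner sum becomes
`n! ∑_{i+j=m-n-1} C(n+i,n) C(n+j,n)`, which is `n! C(m+n, 2n+1)` by the upper Vandermonde
identity, the coefficient form of `(1-X)^{-(n+1)} (1-X)^{-(n+1)} = (1-X)^{-(2n+2)}`.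
-/

open MeasureTheory Finset

noncomputable def K (m : ℕ) (z : ℂ) : ℂ :=
  ∫ w in (0:ℝ)..Real.pi, Complex.exp (z * Real.cos w) * Real.sin (m * w)

open scoped Real Complex Nat

noncomputable def KReal (c : ℝ) (z : ℂ) : ℂ :=
  ∫ w in (0:ℝ)..π, cexp (z * Real.cos w) * Real.sin (c * w)

lemma K_eq_KReal (m : ℕ) (z : ℂ) : K m z = KReal m z := rfl

lemma KReal_zero (z : ℂ) : KReal 0 z = 0 := by simp [KReal]

lemma KReal_neg (c : ℝ) (z : ℂ) : KReal (-c) z = -KReal c z := by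
  simp [KReal, neg_mul, Real.sin_neg, intervalIntegral.integral_neg]

lemma hasDerivAt_cexp_mul_cos_mul_cos (z : ℂ) (c w : ℝ) :
    HasDerivAt (fun w : ℝ => cexp (z * Real.cos w) * Real.cos (c * w))
      (-(z / 2) * (cexp (z * Real.cos w) * Real.sin ((c + 1) * w)
          - cexp (z * Real.cos w) * Real.sin ((c - 1) * w))
        - c * (cexp (z * Real.cos w) * Real.sin (c * w))) w := by
  have hexp := (((Real.hasDerivAt_cos w).ofReal_comp).const_mul z).cexp
  have hcos :=
    ((Real.hasDerivAt_cos (c * w)).comp w ((hasDerivAt_id w).const_mul c)).ofReal_comp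
  refine (hexp.mul hcos).congr_deriv ?_
  rw [add_mul, sub_mul, one_mul, Real.sin_add, Real.sin_sub]
  simp only [Function.comp_apply]
  push_cast
  ring

lemma KReal_recurrence (z : ℂ) (c : ℝ) :
    -(z / 2) * (KReal (c + 1) z - KReal (c - 1) z) - c * KReal c z
      = cexp (-z) * Real.cos (c * π) - cexp z := by
  have hint (d : ℝ) : IntervalIntegrable
      (fun w : ℝ => cexp (z * Real.cos w) * Real.sin (d * w)) volume 0 π :=
    (by fun_prop : Continuous _).intervalIntegrable _ _
  have hFTC := intervalIntegral.integral_eq_sub_of_hasDerivAt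
    (fun w _ => hasDerivAt_cexp_mul_cos_mul_cos z c w)
    ((((hint _).sub (hint _)).const_mul _).sub ((hint _).const_mul _))
  rw [intervalIntegral.integral_sub (((hint _).sub (hint _)).const_mul _) ((hint _).const_mul _),
    intervalIntegral.integral_const_mul, intervalIntegral.integral_const_mul,
    intervalIntegral.integral_sub (hint _) (hint _)] at hFTC
  simpa [KReal, mul_comm] using hFTC

lemma K_one {z : ℂ} (hz : z ≠ 0) : K 1 z = (cexp z - cexp (-z)) / z := by
  have h := KReal_recurrence z 0
  rw [zero_sub, KReal_neg, KReal_zero, zero_add] at h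
  rw [eq_div_iff hz, K_eq_KReal, Nat.cast_one]
  simp only [zero_mul, Real.cos_zero, Complex.ofReal_one, mul_one, Complex.ofReal_zero] at h
  linear_combination -h

lemma K_add_two (m : ℕ) (z : ℂ) :
    -(z / 2) * (K (m + 2) z - K m z) - (m + 1) * K (m + 1) z
      = (-1) ^ (m + 1) * cexp (-z) - cexp z := by
  have h := KReal_recurrence z (m + 1)
  have hcos : Real.cos ((m + 1) * π) = (-1) ^ (m + 1) := by
    exact_mod_cast Real.cos_nat_mul_pi (m + 1)
  rw [add_sub_cancel_right, add_assoc, one_add_one_eq_two, hcos] at h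
  simpa [K_eq_KReal, mul_comm] using h

def kCoeff (m n : ℕ) : ℕ := n ! * (m + n).choose (2 * n + 1)

lemma kCoeff_zero_right (m : ℕ) : kCoeff m 0 = m := by simp [kCoeff]

lemma kCoeff_eq_zero_of_le {m n : ℕ} (h : m ≤ n) : kCoeff m n = 0 := by
  simp [kCoeff, Nat.choose_eq_zero_of_lt (by omega : m + n < 2 * n + 1)]

lemma kCoeff_add_two_add_one (m n : ℕ) :
    kCoeff (m + 2) (n + 1) = kCoeff m (n + 1) + (m + 1) * kCoeff (m + 1) n := by
  set N := m + n + 1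
  set k := 2 * n + 1
  have hpascal : (N + 2).choose (k + 2)
      = N.choose k + 2 * N.choose (k + 1) + N.choose (k + 2) := by
    rw [Nat.choose_succ_succ' (N + 1) (k + 1), Nat.choose_succ_succ' N k,
      Nat.choose_succ_succ' N (k + 1)]
    ring
  have hstep : (n + 1) * (N.choose k + 2 * N.choose (k + 1)) = (m + 1) * N.choose k := by
    rcases le_or_gt n m with hnm | hmn
    · have h := Nat.choose_succ_right_eq N k
      rw [show N - k = m - n by omega] at h
      zify [hnm] at h ⊢
      push_cast [k] at h
      linear_combination h
    · simp [Nat.choose_eq_zero_of_lt (by omega : N < k),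
        Nat.choose_eq_zero_of_lt (by omega : N < k + 1)]
  simp only [kCoeff, Nat.factorial_succ, show m + 2 + (n + 1) = N + 2 by omega,
    show m + (n + 1) = N by omega, show m + 1 + n = N by omega,
    show 2 * (n + 1) + 1 = k + 2 by omega, hpascal]
  linear_combination n ! * hstep

section

variable (z : ℂ)

noncomputable def kTerm (m n : ℕ) : ℂ :=
  (2 / z) ^ n * ((-1) ^ n * cexp z + (-1) ^ m * cexp (-z))

noncomputable def kSum (m : ℕ) : ℂ := ∑ n ∈ range m, kTerm z m n * kCoeff m n

lemma kTerm_zero_right (m : ℕ) : kTerm z m 0 = cexp z + (-1) ^ m * cexp (-z) := by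
  simp [kTerm]

lemma kTerm_add_two_left (m n : ℕ) : kTerm z (m + 2) n = kTerm z m n := by
  simp [kTerm, pow_add]

lemma kTerm_succ_right (m n : ℕ) : kTerm z m (n + 1) = -(2 / z) * kTerm z (m + 1) n := by
  simp only [kTerm, pow_succ]
  ring

lemma sum_range_succ_kTerm_mul_kCoeff (m : ℕ) :
    ∑ n ∈ range (m + 1), kTerm z m (n + 1) * kCoeff m (n + 1) = kSum z m - m * kTerm z m 0 := by
  have h := sum_range_succ' (fun n => kTerm z m n * kCoeff m n) (m + 1)
  rw [sum_range_succ, sum_range_succ _ m, kCoeff_eq_zero_of_le le_rfl,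
    kCoeff_eq_zero_of_le (Nat.le_succ m), kCoeff_zero_right] at h
  rw [kSum]
  push_cast at h
  linear_combination -h

lemma kSum_add_two (m : ℕ) :
    kSum z (m + 2) = kSum z m + 2 * kTerm z m 0 - 2 / z * (m + 1) * kSum z (m + 1) := by
  have hterm (n : ℕ) : kTerm z (m + 2) (n + 1) * kCoeff (m + 2) (n + 1)
      = kTerm z m (n + 1) * kCoeff m (n + 1)
        - 2 / z * (m + 1) * (kTerm z (m + 1) n * kCoeff (m + 1) n) := by
    rw [kTerm_add_two_left, kCoeff_add_two_add_one, kTerm_succ_right]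
    push_cast
    ring
  rw [kSum, sum_range_succ', kTerm_add_two_left, kCoeff_zero_right]
  simp_rw [hterm]
  rw [sum_sub_distrib, ← mul_sum, sum_range_succ_kTerm_mul_kCoeff, ← kSum]
  push_cast
  ring

end

lemma K_eq_kSum_div {z : ℂ} (hz : z ≠ 0) (m : ℕ) : K m z = kSum z m / z := by
  induction m using Nat.twoStepInduction with
  | zero => simp [K, kSum]
  | one => simp [K_one hz, kSum, kTerm, kCoeff_zero_right, sub_eq_add_neg]
  | more m ih ih' =>
    have h := K_add_two m z
    rw [ih, ih'] at h
    rw [kSum_add_two, kTerm_zero_right, eq_div_iff hz]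
    linear_combination (-2) * h + kSum z m * mul_inv_cancel₀ hz

theorem Nat.sum_antidiagonal_add_choose_mul_add_choose (a b n : ℕ) :
    ∑ ij ∈ antidiagonal n, (a + ij.1).choose a * (b + ij.2).choose b =
      (a + b + 1 + n).choose (a + b + 1) := by
  have h := congrArg (fun f => PowerSeries.coeff n f.val)
    (PowerSeries.invOneSubPow_add ℤ (a + 1) (b + 1))
  simp only [Units.val_mul, show a + 1 + (b + 1) = a + b + 1 + 1 by ring,
    PowerSeries.invOneSubPow_val_succ_eq_mk_add_choose, PowerSeries.coeff_mul,
    PowerSeries.coeff_mk] at h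
  exact_mod_cast h.symm

theorem Finset.sum_Icc_one_eq_sum_range {M : Type*} [AddCommMonoid M] (f : ℕ → M) (n : ℕ) :
    ∑ k ∈ Icc 1 n, f k = ∑ i ∈ range n, f (i + 1) := by
  rw [range_eq_Ico, sum_Ico_add' f 0 n 1]
  rfl

section

variable {R : Type*} [CommRing R]

lemma prod_Icc_natCast_sub_eq_descFactorial {m i : ℕ} (hi : i + 1 ≤ m) (n : ℕ) :
    ∏ j ∈ Icc (i + 1) (n + i), ((m : R) - j) = (m - (i + 1)).descFactorial n := by
  rw [← Ico_add_one_right_eq_Icc, prod_Ico_eq_prod_range, show n + i + 1 - (i + 1) = n by omega,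
    ← descPochhammer_eval_eq_descFactorial, descPochhammer_eval_eq_prod_range]
  refine prod_congr rfl fun l _ => ?_
  push_cast [Nat.cast_sub hi]
  ring

lemma sum_choose_mul_prod_sub_eq_kCoeff (m n : ℕ) :
    ∑ k ∈ Icc 1 (m - n), ((n + k - 1).choose (k - 1) : R) * ∏ j ∈ Icc k (n + k - 1), ((m : R) - j)
      = kCoeff m n := by
  rcases le_or_gt m n with hmn | hnm
  · simp [Nat.sub_eq_zero_of_le hmn, kCoeff_eq_zero_of_le hmn]
  obtain ⟨M, rfl⟩ : ∃ M, m = n + M + 1 := ⟨m - n - 1, by omega⟩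
  have hterm (i : ℕ) (hi : i ∈ range (M + 1)) :
      ((n + (i + 1) - 1).choose (i + 1 - 1) : R) * ∏ j ∈ Icc (i + 1) (n + (i + 1) - 1),
        (((n + M + 1 : ℕ) : R) - j) = ((n ! * ((n + i).choose n * (n + (M - i)).choose n) : ℕ) : R) := by
    have hiM := mem_range_succ_iff.1 hi
    rw [show n + (i + 1) - 1 = n + i by omega, Nat.add_sub_cancel, Nat.choose_symm_add,
      prod_Icc_natCast_sub_eq_descFactorial (by omega), Nat.descFactorial_eq_factorial_mul_choose,
      show n + M + 1 - (i + 1) = n + (M - i) by omega]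
    push_cast
    ring
  rw [sum_Icc_one_eq_sum_range, show n + M + 1 - n = M + 1 by omega, sum_congr rfl hterm,
    ← Nat.cast_sum, ← mul_sum, ← Nat.sum_antidiagonal_eq_sum_range_succ_mk
      (fun ij => (n + ij.1).choose n * (n + ij.2).choose n),
    Nat.sum_antidiagonal_add_choose_mul_add_choose, kCoeff,
    show n + n + 1 + M = n + M + 1 + n by ring, two_mul]

end

/-- Explicit formula for `K m z`. -/
theorem K_explicit (m : ℕ) (z : ℂ) (hz : z ≠ 0) :
    K m z = (m / z) * (Complex.exp z + (-1:ℂ)^m * Complex.exp (-z))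
      + (1 / z) * ∑ n ∈ Finset.Icc 1 (m - 1), (2 / z)^n *
          ((-1:ℂ)^n * Complex.exp z + (-1:ℂ)^m * Complex.exp (-z)) *
          ∑ k ∈ Finset.Icc 1 (m - n), ((n + k - 1).choose (k - 1) : ℂ) *
            ∏ j ∈ Finset.Icc k (n + k - 1), ((m:ℂ) - (j:ℂ)) := by
  simp_rw [sum_choose_mul_prod_sub_eq_kCoeff, K_eq_kSum_div hz]
  cases m with
  | zero => simp [kSum]
  | succ m =>
    rw [kSum, sum_range_succ', Nat.add_sub_cancel, sum_Icc_one_eq_sum_range, kCoeff_zero_right,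
      kTerm_zero_right]
    simp only [kTerm]
    ring
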